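/- Let X be a supercritical offspring distribution with X(0) > 0, let (X^N_k) be the censored Galton-Watson process at level N started at N, A_k its successive return times to N, and T = sup{k ≥ 0 : A_k < ∞}. Then T + 1 has the geometric distribution with parameter q_N, i.e. P(T = k) = (1 - q_N)^k q_N for all k ≥ 0, where q_N = P(X^N_k < N for all k > 0). -/

import Mathlib

open MeasureTheory ProbabilityTheory Filter
open scoped ENNReal

/-- Galton-Watson process with offspring array `ξ`, started from `a` individuals. -/
noncomputable def gw {Ω : Type*} (ξ : ℕ × ℕ → Ω → ℕ) (a : ℕ) : ℕ → Ω → ℕ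
  | 0 => fun _ => a
  | k + 1 => fun ω => ∑ i ∈ Finset.range (gw ξ a k ω), ξ (k, i) ω

/-- Galton-Watson process censored at level `N`, started at `N`. -/
noncomputable def cgw {Ω : Type*} (ξ : ℕ × ℕ → Ω → ℕ) (N : ℕ) : ℕ → Ω → ℕ
  | 0 => fun _ => N
  | k + 1 => fun ω =>
      if 0 < cgw ξ N k ω then min N (∑ i ∈ Finset.range (cgw ξ N k ω), ξ (k, i) ω) else 0

/-- Successive return times to `N` of the censored process (`⊤` if no further return). -/
noncomputable def retA {Ω : Type*} (ξ : ℕ × ℕ → Ω → ℕ) (N : ℕ) : ℕ → Ω → ℕ∞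
  | 0 => fun _ => 0
  | k + 1 => fun ω =>
      sInf {m : ℕ∞ | retA ξ N k ω < m ∧ ∃ ℓ : ℕ, m = (ℓ : ℕ∞) ∧ cgw ξ N ℓ ω = N}

/-- Survival time of the censored process: first hitting time of `0`. -/
noncomputable def UN {Ω : Type*} (ξ : ℕ × ℕ → Ω → ℕ) (N : ℕ) (ω : Ω) : ℕ∞ :=
  sInf {m : ℕ∞ | ∃ k : ℕ, m = (k : ℕ∞) ∧ cgw ξ N k ω = 0}

/-- Last time the censored process is at level `N`. -/
noncomputable def VN {Ω : Type*} (ξ : ℕ × ℕ → Ω → ℕ) (N : ℕ) (ω : Ω) : ℕ∞ :=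
  sSup {m : ℕ∞ | ∃ k : ℕ, m = (k : ℕ∞) ∧ cgw ξ N k ω = N}

/-- The number of finite return times: `T = sup {k : A_k < ∞}`. -/
noncomputable def TT {Ω : Type*} (ξ : ℕ × ℕ → Ω → ℕ) (N : ℕ) (ω : Ω) : ℕ∞ :=
  sSup {m : ℕ∞ | ∃ k : ℕ, m = (k : ℕ∞) ∧ retA ξ N k ω < ⊤}

/-! Returns to `N` renew the censored process. By the strong Markov property at the first
return time `A₁`, the event `{A_{k+1} < ∞}` splits according to the value `m` of `A₁` into
`{A₁ = m}`, which depends only on the generations before `m`, intersected with the event that the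
process restarted from `N` at time `m` returns `k` more times. The latter depends only on the
generations from `m` on, which form an offspring array with the same law, so it has probability
`P(A_k < ∞)`. Hence `P(A_k < ∞) = (1 - q_N)^k`, and `{T = k} = {A_k < ∞} \ {A_{k+1} < ∞}`. -/

namespace ENat

noncomputable def nextHit (P : ℕ → Prop) (a : ℕ∞) : ℕ∞ :=
  sInf {t | a < t ∧ ∃ ℓ : ℕ, t = ℓ ∧ P ℓ}

variable {P : ℕ → Prop}

lemma le_nextHit (a : ℕ∞) : a ≤ nextHit P a :=
  le_sInf fun _ ht => ht.1.le

lemma nextHit_eq_top_iff {a : ℕ∞} : nextHit P a = ⊤ ↔ ∀ ℓ : ℕ, a < ℓ → ¬ P ℓ := by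
  simp only [nextHit, sInf_eq_top, Set.mem_ofPred_eq]
  refine ⟨fun h ℓ hℓ hP => natCast_ne_top ℓ (h ℓ ⟨hℓ, ℓ, rfl, hP⟩), ?_⟩
  rintro h _ ⟨hℓ, ℓ, rfl, hP⟩
  exact absurd hP (h ℓ hℓ)

lemma nextHit_top : nextHit P ⊤ = ⊤ :=
  nextHit_eq_top_iff.2 fun _ h => absurd h not_top_lt

lemma nextHit_eq_coe_iff {a n : ℕ} :
    nextHit P a = n ↔ a < n ∧ P n ∧ ∀ ℓ, a < ℓ → ℓ < n → ¬ P ℓ := by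
  constructor
  · intro h
    obtain ⟨hlt, ℓ, hℓ, hP⟩ : (n : ℕ∞) ∈ {t | (a : ℕ∞) < t ∧ ∃ ℓ : ℕ, t = ℓ ∧ P ℓ} :=
      h ▸ csInf_mem (s := {t | (a : ℕ∞) < t ∧ ∃ ℓ : ℕ, t = ℓ ∧ P ℓ}) (by
        by_contra hempty
        rw [Set.not_nonempty_iff_eq_empty] at hempty
        simp [nextHit, hempty] at h)
    obtain rfl : n = ℓ := by exact_mod_cast hℓ
    refine ⟨by exact_mod_cast hlt, hP, fun m ham hmn hPm => ?_⟩
    have : nextHit P a ≤ m := sInf_le ⟨by exact_mod_cast ham, m, rfl, hPm⟩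
    rw [h] at this
    exact absurd (by exact_mod_cast this : n ≤ m) (by omega)
  · rintro ⟨han, hP, hmin⟩
    refine le_antisymm (sInf_le ⟨by exact_mod_cast han, n, rfl, hP⟩) (le_sInf ?_)
    rintro _ ⟨hlt, ℓ, rfl, hPℓ⟩
    by_contra! hℓn
    exact hmin ℓ (by exact_mod_cast hlt) (by exact_mod_cast hℓn) hPℓ

lemma nextHit_add (m : ℕ) (a : ℕ∞) :
    nextHit P (m + a) = m + nextHit (fun ℓ => P (m + ℓ)) a := by
  induction a using ENat.recTopCoe with
  | top => simp [nextHit_top]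
  | coe a =>
    induction h : nextHit (fun ℓ => P (m + ℓ)) a using ENat.recTopCoe with
    | top =>
      rw [add_top, nextHit_eq_top_iff]
      intro ℓ hℓ hP
      have hℓ : m + a < ℓ := by exact_mod_cast hℓ
      exact nextHit_eq_top_iff.1 h (ℓ - m) (by exact_mod_cast (by omega : a < ℓ - m))
        (by rwa [Nat.add_sub_cancel' (by omega)])
    | coe n =>
      obtain ⟨han, hP, hmin⟩ := nextHit_eq_coe_iff.1 h
      rw [← Nat.cast_add, ← Nat.cast_add, nextHit_eq_coe_iff]
      refine ⟨by omega, hP, fun ℓ hℓ hℓn hPℓ => hmin (ℓ - m) (by omega) (by omega) ?_⟩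
      rwa [Nat.add_sub_cancel' (by omega)]

lemma sSup_eq_coe_iff_of_antitone {Q : ℕ → Prop} (hQ : Antitone Q) (h0 : Q 0) {k : ℕ} :
    sSup {t : ℕ∞ | ∃ j : ℕ, t = j ∧ Q j} = k ↔ Q k ∧ ¬ Q (k + 1) := by
  have bound : ∀ n : ℕ, ¬ Q (n + 1) → sSup {t : ℕ∞ | ∃ j : ℕ, t = j ∧ Q j} ≤ n := by
    refine fun n hn => sSup_le ?_
    rintro _ ⟨j, rfl, hj⟩
    by_contra! hlt
    exact hn (hQ (by exact_mod_cast Order.add_one_le_of_lt hlt) hj)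
  have le_sup : ∀ j, Q j → (j : ℕ∞) ≤ sSup {t : ℕ∞ | ∃ j : ℕ, t = j ∧ Q j} :=
    fun j hj => le_sSup ⟨j, rfl, hj⟩
  constructor
  · intro h
    refine ⟨?_, fun hk => ?_⟩
    · by_contra hk
      obtain ⟨n, rfl⟩ : ∃ n, k = n + 1 := Nat.exists_eq_succ_of_ne_zero (by rintro rfl; exact hk h0)
      have : n + 1 ≤ n := by exact_mod_cast h ▸ bound n hk
      omega
    · have : k + 1 ≤ k := by exact_mod_cast h ▸ le_sup (k + 1) hk
      omega
  · rintro ⟨hk, hk1⟩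
    exact le_antisymm (bound k hk1) (le_sup k hk)

end ENat

open ENat

def shiftRows {Ω : Type*} (ξ : ℕ × ℕ → Ω → ℕ) (m : ℕ) : ℕ × ℕ → Ω → ℕ :=
  fun p => ξ (m + p.1, p.2)

section Paths

variable {Ω : Type*} {ξ : ℕ × ℕ → Ω → ℕ} {N : ℕ} {ω : Ω}

lemma cgw_le (k : ℕ) : cgw ξ N k ω ≤ N := by
  cases k with
  | zero => exact le_rfl
  | succ k =>
    simp only [cgw]
    split_ifs
    exacts [min_le_left _ _, Nat.zero_le _]

lemma cgw_shiftRows {m : ℕ} (hm : cgw ξ N m ω = N) (ℓ : ℕ) :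
    cgw (shiftRows ξ m) N ℓ ω = cgw ξ N (m + ℓ) ω := by
  induction ℓ with
  | zero => exact hm.symm
  | succ ℓ ih =>
    rw [← add_assoc]
    simp only [cgw, ih, shiftRows]

lemma retA_zero : retA ξ N 0 ω = 0 := rfl

lemma retA_succ (k : ℕ) :
    retA ξ N (k + 1) ω = nextHit (fun ℓ => cgw ξ N ℓ ω = N) (retA ξ N k ω) := rfl

lemma retA_monotone : Monotone fun k => retA ξ N k ω :=
  monotone_nat_of_le_succ fun k => (le_nextHit _).trans_eq (retA_succ k).symm

lemma retA_one_eq_coe_iff {m : ℕ} :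
    retA ξ N 1 ω = m ↔ 0 < m ∧ cgw ξ N m ω = N ∧ ∀ ℓ, 0 < ℓ → ℓ < m → cgw ξ N ℓ ω ≠ N :=
  nextHit_eq_coe_iff (a := 0)

lemma retA_one_eq_top_iff : retA ξ N 1 ω = ⊤ ↔ ∀ k > 0, cgw ξ N k ω < N := by
  rw [retA_succ, nextHit_eq_top_iff]
  refine forall_congr' fun k => ?_
  rw [(cgw_le k).lt_iff_ne]
  exact imp_congr (by simp [retA_zero, pos_iff_ne_zero]) Iff.rfl

/-- The strong Markov property at the first return, pathwise. -/
lemma retA_succ_eq_add_shiftRows {m : ℕ} (h1 : retA ξ N 1 ω = m) (k : ℕ) :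
    retA ξ N (k + 1) ω = m + retA (shiftRows ξ m) N k ω := by
  have hm : cgw ξ N m ω = N := (retA_one_eq_coe_iff.1 h1).2.1
  induction k with
  | zero => simp [h1, retA_zero]
  | succ k ih =>
    rw [retA_succ, ih, nextHit_add, retA_succ]
    simp only [cgw_shiftRows hm]

lemma setOf_retA_succ_lt_top (ξ : ℕ × ℕ → Ω → ℕ) (N k : ℕ) :
    {ω | retA ξ N (k + 1) ω < ⊤}
      = ⋃ m : ℕ, {ω | retA ξ N 1 ω = m} ∩ {ω | retA (shiftRows ξ m) N k ω < ⊤} := by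
  ext ω
  simp only [Set.mem_ofPred_eq, Set.mem_iUnion, Set.mem_inter_iff]
  induction h : retA ξ N 1 ω using ENat.recTopCoe with
  | top =>
    have : retA ξ N (k + 1) ω = ⊤ := top_le_iff.1 (h ▸ retA_monotone (by omega))
    simp [this]
  | coe m =>
    rw [retA_succ_eq_add_shiftRows h]
    simp

lemma TT_eq_coe_iff {k : ℕ} :
    TT ξ N ω = k ↔ retA ξ N k ω < ⊤ ∧ retA ξ N (k + 1) ω = ⊤ := by
  rw [TT, sSup_eq_coe_iff_of_antitone (fun _ _ hij h => (retA_monotone hij).trans_lt h)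
    (by simp [retA_zero]), not_lt_top_iff]

end Paths

section Measurability

variable {Ω : Type*} {M : MeasurableSpace Ω} {ξ : ℕ × ℕ → Ω → ℕ} {N : ℕ}

lemma measurable_cgw {j : ℕ} (hξ : ∀ p : ℕ × ℕ, p.1 < j → Measurable (ξ p)) :
    Measurable (cgw ξ N j) := by
  induction j with
  | zero => exact measurable_const
  | succ j ih =>
    have hnext : Measurable fun q : Ω × ℕ =>
        if 0 < q.2 then min N (∑ i ∈ Finset.range q.2, ξ (j, i) q.1) else 0 :=
      measurable_from_prod_countable_left fun n => by
        dsimp only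
        split_ifs
        exacts [measurable_const.min (Finset.measurable_sum _ fun i _ => hξ (j, i) (by simp)),
          measurable_const]
    exact hnext.comp (measurable_id.prodMk (ih fun p hp => hξ p (by omega)))

lemma measurableSet_retA_one_eq {m : ℕ} (hξ : ∀ p : ℕ × ℕ, p.1 < m → Measurable (ξ p)) :
    MeasurableSet {ω | retA ξ N 1 ω = m} := by
  have hcgw : ∀ ℓ ≤ m, Measurable fun ω => cgw ξ N ℓ ω = N := fun ℓ hℓ =>
    measurableSet_setOfPred.1 (measurable_cgw (fun p hp => hξ p (by omega))
      (measurableSet_singleton N))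
  simp only [retA_one_eq_coe_iff]
  refine Measurable.setOf (measurable_const.and ((hcgw m le_rfl).and
    (Measurable.forall fun ℓ => measurable_const.imp ?_)))
  by_cases hℓ : ℓ < m
  · exact measurable_const.imp (hcgw ℓ hℓ.le).not
  · simp [hℓ]

lemma measurableSet_retA_lt_top (hξ : ∀ p, Measurable (ξ p)) (k : ℕ) :
    MeasurableSet {ω | retA ξ N k ω < ⊤} := by
  induction k generalizing ξ with
  | zero => simp [retA_zero]
  | succ k ih =>
    rw [setOf_retA_succ_lt_top]
    exact .iUnion fun m => (measurableSet_retA_one_eq fun p _ => hξ p).inter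
      (ih fun p => hξ _)

end Measurability

section Law

variable {Ω : Type*} {ξ : ℕ × ℕ → Ω → ℕ} {N : ℕ}

lemma cgw_eq_cgw_eval (k : ℕ) (ω : Ω) :
    cgw ξ N k ω = cgw (fun p (v : ℕ × ℕ → ℕ) => v p) N k (fun p => ξ p ω) := by
  induction k with
  | zero => rfl
  | succ k ih => simp only [cgw, ih]

lemma retA_eq_retA_eval (k : ℕ) (ω : Ω) :
    retA ξ N k ω = retA (fun p (v : ℕ × ℕ → ℕ) => v p) N k (fun p => ξ p ω) := by
  induction k with
  | zero => rfl
  | succ k ih => simp only [retA_succ, ih, cgw_eq_cgw_eval _ ω]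

variable [MeasurableSpace Ω] {μ : Measure Ω} {ξ' : ℕ × ℕ → Ω → ℕ}

/-- The return probabilities only depend on the law of the offspring array, which for
independent offspring numbers is the product of the marginals. -/
lemma measure_retA_lt_top_congr (hξ : ∀ p, Measurable (ξ p)) (hξ' : ∀ p, Measurable (ξ' p))
    (hind : iIndepFun ξ μ) (hind' : iIndepFun ξ' μ)
    (hlaw : ∀ p, μ.map (ξ p) = μ.map (ξ' p)) (k : ℕ) :
    μ {ω | retA ξ N k ω < ⊤} = μ {ω | retA ξ' N k ω < ⊤} := by
  have hE := measurableSet_retA_lt_top (ξ := fun p (v : ℕ × ℕ → ℕ) => v p) (N := N)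
    (fun p => measurable_pi_apply p) k
  have hmap : μ.map (fun ω p => ξ p ω) = μ.map (fun ω p => ξ' p ω) := by
    rw [hind.map_fun_eq_infinitePi_map hξ, hind'.map_fun_eq_infinitePi_map hξ', funext hlaw]
  have hpre : ∀ η : ℕ × ℕ → Ω → ℕ, (∀ p, Measurable (η p)) →
      μ {ω | retA η N k ω < ⊤} = μ.map (fun ω p => η p ω) {v | retA _ N k v < ⊤} :=
    fun η hη => by
      rw [Measure.map_apply (measurable_pi_lambda _ hη) hE]
      simp only [retA_eq_retA_eval (ξ := η) k]
      rfl
  rw [hpre ξ hξ, hpre ξ' hξ', hmap]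

end Law

section Renewal

variable {Ω : Type*} [MeasurableSpace Ω] {μ : Measure Ω} {ν : Measure ℕ}
  {ξ : ℕ × ℕ → Ω → ℕ} {N : ℕ}

/-- The first return time to `N` only depends on the generations before it, while the returns
after it are driven by the later generations. -/
lemma measure_retA_one_eq_inter_shiftRows (hξ : ∀ p, Measurable (ξ p))
    (hind : iIndepFun ξ μ) (m k : ℕ) :
    μ ({ω | retA ξ N 1 ω = m} ∩ {ω | retA (shiftRows ξ m) N k ω < ⊤})
      = μ {ω | retA ξ N 1 ω = m} * μ {ω | retA (shiftRows ξ m) N k ω < ⊤} := by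
  let rows : Set (ℕ × ℕ) → MeasurableSpace Ω := fun S => ⨆ p ∈ S, .comap (ξ p) inferInstance
  have hrows : ∀ {S p}, p ∈ S → Measurable[rows S] (ξ p) := fun hp =>
    (comap_measurable _).mono
      (le_iSup₂ (f := fun p (_ : p ∈ _) => MeasurableSpace.comap (ξ p) _) _ hp) le_rfl
  have hindep : Indep (rows {p | p.1 < m}) (rows {p | m ≤ p.1}) μ :=
    indep_iSup_of_disjoint (fun p => (hξ p).comap_le) hind.iIndep
      (Set.disjoint_left.2 fun p (h₁ : p.1 < m) (h₂ : m ≤ p.1) => by omega)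
  exact (Indep_iff _ _ μ).1 hindep _ _
    (measurableSet_retA_one_eq fun p hp => hrows hp)
    (measurableSet_retA_lt_top (fun p => hrows (show m ≤ m + p.1 by omega)) k)

lemma measure_retA_succ_lt_top (hξ : ∀ p, Measurable (ξ p)) (hind : iIndepFun ξ μ)
    (hlaw : ∀ p, μ.map (ξ p) = ν) (k : ℕ) :
    μ {ω | retA ξ N (k + 1) ω < ⊤}
      = μ {ω | retA ξ N 1 ω < ⊤} * μ {ω | retA ξ N k ω < ⊤} := by
  have hdisj : Pairwise (Function.onFun Disjoint fun m : ℕ => {ω | retA ξ N 1 ω = m}) :=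
    fun m m' hne => Set.disjoint_left.2 fun ω (h : _ = _) (h' : _ = _) =>
      hne (by exact_mod_cast h.symm.trans h')
  have hmeas : ∀ m : ℕ, MeasurableSet {ω | retA ξ N 1 ω = m} :=
    fun m => measurableSet_retA_one_eq fun p _ => hξ p
  have hshift : ∀ m, μ {ω | retA (shiftRows ξ m) N k ω < ⊤} = μ {ω | retA ξ N k ω < ⊤} :=
    fun m => measure_retA_lt_top_congr (fun p => hξ _) hξ
      (hind.precomp fun p q h => by simpa [Prod.ext_iff] using h) hind
      (fun p => (hlaw _).trans (hlaw p).symm) k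
  have hfirst : {ω | retA ξ N 1 ω < ⊤} = ⋃ m : ℕ, {ω | retA ξ N 1 ω = m} := by
    ext ω
    simp [lt_top_iff_ne_top, ENat.ne_top_iff_exists, eq_comm]
  have hmeas' : ∀ m, MeasurableSet {ω | retA (shiftRows ξ m) N k ω < ⊤} :=
    fun m => measurableSet_retA_lt_top (fun p => hξ _) k
  rw [setOf_retA_succ_lt_top, measure_iUnion (fun m m' hne => (hdisj hne).mono
    Set.inter_subset_left Set.inter_subset_left) fun m => (hmeas m).inter (hmeas' m), hfirst,
    measure_iUnion hdisj hmeas, ← ENNReal.tsum_mul_right]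
  exact tsum_congr fun m => by
    rw [measure_retA_one_eq_inter_shiftRows hξ hind, hshift]

lemma measure_retA_lt_top (hξ : ∀ p, Measurable (ξ p)) (hind : iIndepFun ξ μ)
    (hlaw : ∀ p, μ.map (ξ p) = ν) (k : ℕ) :
    μ {ω | retA ξ N k ω < ⊤} = μ {ω | retA ξ N 1 ω < ⊤} ^ k := by
  induction k with
  | zero => simpa [retA_zero] using hind.isProbabilityMeasure.measure_univ
  | succ k ih => rw [measure_retA_succ_lt_top hξ hind hlaw, ih, pow_succ']

end Renewal

lemma ENNReal.pow_sub_pow_succ_eq_ofReal {c : ℝ≥0∞} (hc : c ≤ 1) (k : ℕ) :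
    c ^ k - c ^ (k + 1) = ENNReal.ofReal ((1 - (1 - c).toReal) ^ k * (1 - c).toReal) := by
  have hc' : c ≠ ⊤ := ne_top_of_le_ne_top one_ne_top hc
  rw [toReal_sub_of_le hc one_ne_top, toReal_one, _root_.sub_sub_cancel,
    ofReal_mul (by positivity), ofReal_pow toReal_nonneg, ofReal_toReal hc',
    ← toReal_one, ← toReal_sub_of_le hc one_ne_top, ofReal_toReal (sub_ne_top one_ne_top),
    ENNReal.mul_sub fun _ _ => pow_ne_top hc', mul_one, pow_succ]

theorem stmt11_general
    {Ω : Type*} [MeasurableSpace Ω] (μ : Measure Ω) [IsProbabilityMeasure μ]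
    (pX : Measure ℕ)
    (ξ : ℕ × ℕ → Ω → ℕ)
    (hmeas : ∀ p, Measurable (ξ p))
    (hindep : iIndepFun ξ μ)
    (hlaw : ∀ p, Measure.map (ξ p) μ = pX)
    (N : ℕ)
    (qN : ℝ)
    (hqN : qN = (μ {ω | ∀ k > 0, cgw ξ N k ω < N}).toReal) :
    ∀ k : ℕ, μ {ω | TT ξ N ω = (k : ℕ∞)} = ENNReal.ofReal ((1 - qN) ^ k * qN) := by
  intro k
  have hqN' : qN = (1 - μ {ω | retA ξ N 1 ω < ⊤}).toReal := by
    rw [hqN, ← prob_compl_eq_one_sub (measurableSet_retA_lt_top hmeas 1)]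
    simp [Set.compl_def, retA_one_eq_top_iff]
  have hT : {ω | TT ξ N ω = k} = {ω | retA ξ N k ω < ⊤} \ {ω | retA ξ N (k + 1) ω < ⊤} := by
    ext ω
    simp [TT_eq_coe_iff]
  have hsub : {ω | retA ξ N (k + 1) ω < ⊤} ⊆ {ω | retA ξ N k ω < ⊤} :=
    fun ω h => (retA_monotone k.le_succ).trans_lt h
  rw [hT, measure_sdiff hsub
      (measurableSet_retA_lt_top hmeas _).nullMeasurableSet (measure_ne_top μ _),
    measure_retA_lt_top hmeas hindep hlaw k, measure_retA_lt_top hmeas hindep hlaw (k + 1), hqN']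
  exact ENNReal.pow_sub_pow_succ_eq_ofReal (prob_le_one (μ := μ)) k

/-- the number `T` of finite return times to `N` satisfies
`P(T = k) = (1 - q_N)^k q_N`, i.e. `T + 1` is geometric with parameter `q_N`. -/
theorem stmt11
    {Ω : Type*} [MeasurableSpace Ω] (μ : Measure Ω) [IsProbabilityMeasure μ]
    (pX : Measure ℕ) [IsProbabilityMeasure pX]
    (hmean : 1 < ∑' n : ℕ, (n : ℝ≥0∞) * pX {n})
    (h0 : 0 < pX {0})
    (ξ : ℕ × ℕ → Ω → ℕ)
    (hmeas : ∀ p, Measurable (ξ p))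
    (hindep : iIndepFun ξ μ)
    (hlaw : ∀ p, Measure.map (ξ p) μ = pX)
    (N : ℕ) (hN : 2 ≤ N)
    (qN : ℝ)
    (hqN : qN = (μ {ω | ∀ k > 0, cgw ξ N k ω < N}).toReal) :
    ∀ k : ℕ, μ {ω | TT ξ N ω = (k : ℕ∞)} = ENNReal.ofReal ((1 - qN) ^ k * qN) :=
  stmt11_general μ pX ξ hmeas hindep hlaw N qN hqN
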